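/- arXiv:1509.05196 — 3 statements merged into one kernel-verified Lean document; each statement's English description precedes it below -/
import Mathlib

section
/- (Proposition 1) Under Assumptions 1 and 2, let x : [t_k, t_{k+1}] → ℝⁿ be a solution of the continuous dynamics ẋ(t) = −[∇ₓₓ f(x(t);t)]⁻¹ ∇_{tx} f(x(t);t) with initial condition x(t_k) = x_k, and let x_{k+1|k} = x_k − h·[∇ₓₓ f(x_k;t_k)]⁻¹ ∇_{tx} f(x_k;t_k) be the forward-Euler step. Then the local truncation error Δ_k := x_{k+1|k} − x(t_{k+1}) satisfies ‖Δ_k‖ ≤ (h²/2)·[C₀²C₁/m³ + 2C₀C₂/m² + C₃/m]. -/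
/-!
Write `V(y,t) = -[∇ₓₓ f(y;t)]⁻¹ ∇_{tx} f(y;t)` for the vector field of the dynamics. By strong
convexity `‖[∇ₓₓ f]⁻¹‖ ≤ 1/m`, so `‖V‖ ≤ C₀/m` and the trajectory moves at most `(C₀/m)(t - t_k)`
from `x_k`. Expanding `A⁻¹u - B⁻¹v = B⁻¹(u - v + (B - A)A⁻¹u)` shows that `V` is Lipschitz in
`y` and in `t`; along the trajectory this gives `‖V(x_k,t_k) - ẋ(t)‖ ≤ M (t - t_k)` with
`M = C₀²C₁/m³ + 2C₀C₂/m² + C₃/m`. An error whose derivative grows at most like `M (t - t_k)`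
is at most `M h²/2` after time `h`.
-/

noncomputable section

/-- The setting of a time-varying, smooth, strongly convex optimization problem
`min_{x ∈ ℝⁿ} f(x;t)`, bundling the objective `f`, its derivatives, the Hessian
inverse, the optimal trajectory `x*(t)`, and Assumptions 1 and 2 of the paper. -/
structure TVOpt (n : ℕ) where
  /-- the objective `f(x;t)` -/
  f : EuclideanSpace ℝ (Fin n) → ℝ → ℝ
  /-- the gradient `∇ₓ f(x;t)` -/
  grad : EuclideanSpace ℝ (Fin n) → ℝ → EuclideanSpace ℝ (Fin n)
  /-- the Hessian `∇ₓₓ f(x;t)` -/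
  hess : EuclideanSpace ℝ (Fin n) → ℝ →
    EuclideanSpace ℝ (Fin n) →L[ℝ] EuclideanSpace ℝ (Fin n)
  /-- the Hessian inverse `[∇ₓₓ f(x;t)]⁻¹` -/
  hessInv : EuclideanSpace ℝ (Fin n) → ℝ →
    EuclideanSpace ℝ (Fin n) →L[ℝ] EuclideanSpace ℝ (Fin n)
  /-- the mixed partial derivative `∇_{tx} f(x;t)` -/
  dtgrad : EuclideanSpace ℝ (Fin n) → ℝ → EuclideanSpace ℝ (Fin n)
  /-- the third derivative tensor `∇ₓₓₓ f(x;t)` -/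
  d3 : EuclideanSpace ℝ (Fin n) → ℝ →
    EuclideanSpace ℝ (Fin n) →L[ℝ] EuclideanSpace ℝ (Fin n) →L[ℝ] EuclideanSpace ℝ (Fin n)
  /-- the time derivative of the Hessian `∇_{xtx} f(x;t)` -/
  dthess : EuclideanSpace ℝ (Fin n) → ℝ →
    EuclideanSpace ℝ (Fin n) →L[ℝ] EuclideanSpace ℝ (Fin n)
  /-- the second time derivative of the gradient `∇_{ttx} f(x;t)` -/
  dttgrad : EuclideanSpace ℝ (Fin n) → ℝ → EuclideanSpace ℝ (Fin n)
  /-- the optimal trajectory `x*(t)` -/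
  xstar : ℝ → EuclideanSpace ℝ (Fin n)
  /-- strong convexity constant -/
  m : ℝ
  /-- Hessian norm bound (gradient Lipschitz constant) -/
  L : ℝ
  C0 : ℝ
  C1 : ℝ
  C2 : ℝ
  C3 : ℝ
  m_pos : 0 < m
  grad_spec : ∀ (x : EuclideanSpace ℝ (Fin n)) (t : ℝ), HasGradientAt (fun y => f y t) (grad x t) x
  hess_spec : ∀ (x : EuclideanSpace ℝ (Fin n)) (t : ℝ), HasFDerivAt (fun y => grad y t) (hess x t) x
  dtgrad_spec : ∀ (x : EuclideanSpace ℝ (Fin n)) (t : ℝ), HasDerivAt (fun s => grad x s) (dtgrad x t) t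
  d3_spec : ∀ (x : EuclideanSpace ℝ (Fin n)) (t : ℝ), HasFDerivAt (fun y => hess y t) (d3 x t) x
  dthess_spec : ∀ (x : EuclideanSpace ℝ (Fin n)) (t : ℝ), HasDerivAt (fun s => hess x s) (dthess x t) t
  dttgrad_spec : ∀ (x : EuclideanSpace ℝ (Fin n)) (t : ℝ), HasDerivAt (fun s => dtgrad x s) (dttgrad x t) t
  /-- Assumption 1: `∇ₓₓ f(x;t) ⪰ m·I` uniformly in `x` and `t`. -/
  strong_convex : ∀ (x : EuclideanSpace ℝ (Fin n)) (t : ℝ) (v : EuclideanSpace ℝ (Fin n)),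
    m * ‖v‖ ^ 2 ≤ @inner ℝ _ _ v (hess x t v)
  hessInv_left : ∀ (x : EuclideanSpace ℝ (Fin n)) (t : ℝ), ContinuousLinearMap.comp (hessInv x t) (hess x t) =
    ContinuousLinearMap.id ℝ (EuclideanSpace ℝ (Fin n))
  hessInv_right : ∀ (x : EuclideanSpace ℝ (Fin n)) (t : ℝ), ContinuousLinearMap.comp (hess x t) (hessInv x t) =
    ContinuousLinearMap.id ℝ (EuclideanSpace ℝ (Fin n))
  /-- Assumption 2: bounded derivatives, uniformly in `x` and `t`. -/
  hess_bound : ∀ (x : EuclideanSpace ℝ (Fin n)) (t : ℝ), ‖hess x t‖ ≤ L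
  dtgrad_bound : ∀ (x : EuclideanSpace ℝ (Fin n)) (t : ℝ), ‖dtgrad x t‖ ≤ C0
  d3_bound : ∀ (x : EuclideanSpace ℝ (Fin n)) (t : ℝ), ‖d3 x t‖ ≤ C1
  dthess_bound : ∀ (x : EuclideanSpace ℝ (Fin n)) (t : ℝ), ‖dthess x t‖ ≤ C2
  dttgrad_bound : ∀ (x : EuclideanSpace ℝ (Fin n)) (t : ℝ), ‖dttgrad x t‖ ≤ C3
  /-- `x*(t)` minimizes `f(·;t)` -/
  xstar_min : ∀ t : ℝ, IsMinOn (fun x => f x t) Set.univ (xstar t)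
  /-- equivalently, `∇ₓ f(x*(t);t) = 0` -/
  xstar_grad : ∀ t : ℝ, grad (xstar t) t = 0

open Set

section Calculus

variable {E F : Type*} [NormedAddCommGroup E] [NormedSpace ℝ E]
  [NormedAddCommGroup F] [NormedSpace ℝ F]

theorem norm_euler_step_sub_le {x g : ℝ → E} {a b K : ℝ} (hab : a ≤ b)
    (hx : ∀ t ∈ Icc a b, HasDerivAt x (g t) t)
    (hg : ∀ t ∈ Ico a b, ‖g a - g t‖ ≤ K * (t - a)) :
    ‖x a + (b - a) • g a - x b‖ ≤ K / 2 * (b - a) ^ 2 := by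
  have herr : ∀ t ∈ Icc a b,
      HasDerivAt (fun s => x a + (s - a) • g a - x s) (g a - g t) t := fun t ht => by
    have h := ((((hasDerivAt_id t).sub_const a).smul_const (g a)).const_add (x a)).sub (hx t ht)
    rwa [one_smul] at h
  have hbound : ∀ t, HasDerivAt (fun s => K / 2 * (s - a) ^ 2) (K * (t - a)) t := fun t => by
    refine ((((hasDerivAt_id t).sub_const a).pow 2).const_mul (K / 2)).congr_deriv ?_
    simp only [id_eq]
    push_cast
    ring
  exact image_norm_le_of_norm_deriv_right_le_deriv_boundary
    (fun t ht => (herr t ht).continuousAt.continuousWithinAt)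
    (fun t ht => (herr t (Ico_subset_Icc_self ht)).hasDerivWithinAt) (by simp) hbound
    hg (right_mem_Icc.mpr hab)

/-- Quantitative symmetry of mixed partials, by the converse mean value inequality in `t`. -/
theorem norm_sub_le_of_hasFDerivAt_of_hasDerivAt {G : E → ℝ → F} {Gx : E → ℝ → E →L[ℝ] F}
    {Gt : E → ℝ → F} {C t : ℝ} (hC : 0 ≤ C) (hGx : ∀ y s, HasFDerivAt (G · s) (Gx y s) y)
    (hGt : ∀ y, HasDerivAt (G y) (Gt y t) t) (hlip : ∀ y s, ‖Gx y s - Gx y t‖ ≤ C * |s - t|)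
    (y y' : E) : ‖Gt y t - Gt y' t‖ ≤ C * ‖y - y'‖ := by
  refine ((hGt y).sub (hGt y')).le_of_lip' (mul_nonneg hC (norm_nonneg _))
    (Filter.Eventually.of_forall fun s => ?_)
  have key := convex_univ.norm_image_sub_le_of_norm_hasFDerivWithin_le
    (f := fun z => G z s - G z t) (fun z _ => ((hGx z s).sub (hGx z t)).hasFDerivWithinAt)
    (fun z _ => hlip z s) (mem_univ y') (mem_univ y)
  calc ‖G y s - G y' s - (G y t - G y' t)‖
      = ‖G y s - G y t - (G y' s - G y' t)‖ := by congr 1; abel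
    _ ≤ C * |s - t| * ‖y - y'‖ := key
    _ = C * ‖y - y'‖ * ‖s - t‖ := by rw [Real.norm_eq_abs]; ring

theorem ContinuousLinearMap.apply_sub_apply_eq_of_inverse {A A' B B' : E →L[ℝ] E}
    (hA : A.comp A' = .id ℝ E) (hB : B'.comp B = .id ℝ E) (u v : E) :
    A' u - B' v = B' (u - v + (B - A) (A' u)) := by
  have hAA' : A (A' u) = u := by simpa using congrArg (· u) hA
  have hB'B : B' (B (A' u)) = A' u := by simpa using congrArg (· (A' u)) hB
  rw [map_add, map_sub, sub_apply, map_sub, hAA', hB'B]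
  abel

end Calculus

theorem mul_norm_le_norm_apply_of_coercive {E : Type*} [NormedAddCommGroup E]
    [InnerProductSpace ℝ E] {m : ℝ} {T : E → E} (hT : ∀ v, m * ‖v‖ ^ 2 ≤ inner ℝ v (T v))
    (v : E) : m * ‖v‖ ≤ ‖T v‖ := by
  rcases (norm_nonneg v).eq_or_lt with hv | hv
  · rw [← hv, mul_zero]
    exact norm_nonneg _
  · refine le_of_mul_le_mul_left ?_ hv
    nlinarith [hT v, real_inner_le_norm v (T v)]

namespace TVOpt

variable {n : ℕ} (P : TVOpt n)

theorem C0_nonneg : 0 ≤ P.C0 := (norm_nonneg _).trans (P.dtgrad_bound 0 0)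
theorem C1_nonneg : 0 ≤ P.C1 := (norm_nonneg (P.d3 0 0)).trans (P.d3_bound 0 0)
theorem C2_nonneg : 0 ≤ P.C2 := (norm_nonneg (P.dthess 0 0)).trans (P.dthess_bound 0 0)

def drift (y : EuclideanSpace ℝ (Fin n)) (t : ℝ) : EuclideanSpace ℝ (Fin n) :=
  -P.hessInv y t (P.dtgrad y t)

theorem norm_hessInv_apply_le (y : EuclideanSpace ℝ (Fin n)) (t : ℝ)
    (w : EuclideanSpace ℝ (Fin n)) : ‖P.hessInv y t w‖ ≤ ‖w‖ / P.m := by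
  have hw : P.hess y t (P.hessInv y t w) = w := by
    simpa using congrArg (· w) (P.hessInv_right y t)
  rw [le_div_iff₀ P.m_pos, mul_comm]
  simpa [hw] using mul_norm_le_norm_apply_of_coercive (P.strong_convex y t) (P.hessInv y t w)

theorem norm_drift_le (y : EuclideanSpace ℝ (Fin n)) (t : ℝ) : ‖P.drift y t‖ ≤ P.C0 / P.m := by
  rw [drift, norm_neg]
  exact (P.norm_hessInv_apply_le y t _).trans
    (div_le_div_of_nonneg_right (P.dtgrad_bound y t) P.m_pos.le)

theorem norm_hess_sub_le (y y' : EuclideanSpace ℝ (Fin n)) (s t : ℝ) :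
    ‖P.hess y s - P.hess y' t‖ ≤ P.C1 * ‖y - y'‖ + P.C2 * |s - t| := by
  have hy := convex_univ.norm_image_sub_le_of_norm_hasFDerivWithin_le
    (fun z _ => (P.d3_spec z s).hasFDerivWithinAt) (fun z _ => P.d3_bound z s)
    (mem_univ y') (mem_univ y)
  have hs := convex_univ.norm_image_sub_le_of_norm_hasDerivWithin_le
    (fun u _ => (P.dthess_spec y' u).hasDerivWithinAt) (fun u _ => P.dthess_bound y' u)
    (mem_univ t) (mem_univ s)
  rw [Real.norm_eq_abs] at hs
  exact (norm_sub_le_norm_sub_add_norm_sub _ (P.hess y' s) _).trans (add_le_add hy hs)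

theorem norm_dtgrad_sub_le (y y' : EuclideanSpace ℝ (Fin n)) (s t : ℝ) :
    ‖P.dtgrad y s - P.dtgrad y' t‖ ≤ P.C2 * ‖y - y'‖ + P.C3 * |s - t| := by
  have hy := norm_sub_le_of_hasFDerivAt_of_hasDerivAt P.C2_nonneg P.hess_spec
    (fun z => P.dtgrad_spec z s) (fun z u => by simpa using P.norm_hess_sub_le z z u s) y y'
  have hs := convex_univ.norm_image_sub_le_of_norm_hasDerivWithin_le
    (fun u _ => (P.dttgrad_spec y' u).hasDerivWithinAt) (fun u _ => P.dttgrad_bound y' u)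
    (mem_univ t) (mem_univ s)
  rw [Real.norm_eq_abs] at hs
  exact (norm_sub_le_norm_sub_add_norm_sub _ (P.dtgrad y' s) _).trans (add_le_add hy hs)

theorem norm_drift_sub_le (y y' : EuclideanSpace ℝ (Fin n)) (s t : ℝ) :
    ‖P.drift y s - P.drift y' t‖ ≤
      (P.C2 * ‖y - y'‖ + P.C3 * |s - t| + (P.C1 * ‖y - y'‖ + P.C2 * |s - t|) * (P.C0 / P.m))
        / P.m := by
  rw [drift, drift, neg_sub_neg, norm_sub_rev, ContinuousLinearMap.apply_sub_apply_eq_of_inverse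
    (P.hessInv_right y s) (P.hessInv_left y' t)]
  refine (P.norm_hessInv_apply_le y' t _).trans (div_le_div_of_nonneg_right ?_ P.m_pos.le)
  refine (norm_add_le _ _).trans (add_le_add (P.norm_dtgrad_sub_le y y' s t) ?_)
  refine ((P.hess y' t - P.hess y s).le_opNorm _).trans (mul_le_mul ?_ ?_ (norm_nonneg _) ?_)
  · rw [norm_sub_rev]
    exact P.norm_hess_sub_le y y' s t
  · simpa [drift] using P.norm_drift_le y s
  · have := P.C1_nonneg
    have := P.C2_nonneg
    positivity

theorem norm_drift_sub_le_of_norm_sub_le {y y' : EuclideanSpace ℝ (Fin n)} {s t : ℝ}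
    (hy : ‖y - y'‖ ≤ P.C0 / P.m * |s - t|) :
    ‖P.drift y s - P.drift y' t‖ ≤
      (P.C0 ^ 2 * P.C1 / P.m ^ 3 + 2 * P.C0 * P.C2 / P.m ^ 2 + P.C3 / P.m) * |s - t| := by
  have := P.C1_nonneg
  have := P.C2_nonneg
  calc ‖P.drift y s - P.drift y' t‖
      ≤ (P.C2 * ‖y - y'‖ + P.C3 * |s - t| + (P.C1 * ‖y - y'‖ + P.C2 * |s - t|) * (P.C0 / P.m))
        / P.m := P.norm_drift_sub_le y y' s t
    _ ≤ (P.C2 * (P.C0 / P.m * |s - t|) + P.C3 * |s - t|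
          + (P.C1 * (P.C0 / P.m * |s - t|) + P.C2 * |s - t|) * (P.C0 / P.m)) / P.m := by
      have := P.C0_nonneg
      have := P.m_pos
      gcongr
    _ = (P.C0 ^ 2 * P.C1 / P.m ^ 3 + 2 * P.C0 * P.C2 / P.m ^ 2 + P.C3 / P.m) * |s - t| := by
      have := P.m_pos.ne'
      field_simp
      ring

end TVOpt

/-- **Proposition 1.** The local truncation error of the forward-Euler
prediction step, relative to the exact continuous dynamics
`ẋ = −[∇ₓₓ f(x;t)]⁻¹ ∇_tx f(x;t)` started from the same initial condition, is bounded
by `(h²/2)·[C₀²C₁/m³ + 2C₀C₂/m² + C₃/m]`. -/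
theorem euler_truncation_error (n : ℕ) (P : TVOpt n) (h : ℝ) (hh : 0 < h) (k : ℕ)
    (x : ℝ → EuclideanSpace ℝ (Fin n)) (xk : EuclideanSpace ℝ (Fin n))
    (hinit : x ((k : ℝ) * h) = xk)
    (hode : ∀ t ∈ Set.Icc ((k : ℝ) * h) (((k : ℝ) + 1) * h),
      HasDerivAt x (-(P.hessInv (x t) t (P.dtgrad (x t) t))) t) :
    ‖(xk - h • P.hessInv xk ((k : ℝ) * h) (P.dtgrad xk ((k : ℝ) * h)))
        - x (((k : ℝ) + 1) * h)‖ ≤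
      h ^ 2 / 2 * (P.C0 ^ 2 * P.C1 / P.m ^ 3 + 2 * P.C0 * P.C2 / P.m ^ 2 + P.C3 / P.m) := by
  set a : ℝ := (k : ℝ) * h
  set b : ℝ := ((k : ℝ) + 1) * h
  have hba : b - a = h := by ring
  have hode' : ∀ t ∈ Icc a b, HasDerivAt x (P.drift (x t) t) t := hode
  have hdisp : ∀ t ∈ Icc a b, ‖x t - x a‖ ≤ P.C0 / P.m * (t - a) :=
    norm_image_sub_le_of_norm_deriv_le_segment' (fun t ht => (hode' t ht).hasDerivWithinAt)
      (fun t _ => P.norm_drift_le (x t) t)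
  have hvar : ∀ t ∈ Ico a b, ‖P.drift (x a) a - P.drift (x t) t‖ ≤
      (P.C0 ^ 2 * P.C1 / P.m ^ 3 + 2 * P.C0 * P.C2 / P.m ^ 2 + P.C3 / P.m) * (t - a) := by
    intro t ht
    have hta : |a - t| = t - a := by rw [abs_sub_comm, abs_of_nonneg (sub_nonneg.2 ht.1)]
    rw [← hta]
    refine P.norm_drift_sub_le_of_norm_sub_le ?_
    rw [norm_sub_rev, hta]
    exact hdisp t (Ico_subset_Icc_self ht)
  calc _ = ‖x a + (b - a) • P.drift (x a) a - x b‖ := by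
        rw [hba, hinit, TVOpt.drift, smul_neg, ← sub_eq_add_neg]
    _ ≤ _ := norm_euler_step_sub_le (g := fun t => P.drift (x t) t) (by linarith) hode' hvar
    _ = _ := by rw [hba]; ring
end
end

section
/- (Corollary 1, part a) Under Assumptions 1 and 2, let the GTT stepsize satisfy 0 < γ < 2/L, define ρ := max{|1−γm|, |1−γL|} and σ := 1 + h·(C₀C₁/m² + C₂/m), and suppose ρ^τ·σ ≥ 1 and ρ^τ < 1. Then the GTT iterates satisfy limsup_{k→∞} ‖x_k − x*(t_k)‖ ≤ 2C₀·ρ^τ·h / (m·(1 − ρ^τ)), i.e. an asymptotic tracking error of order O(h). -/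
noncomputable section

open RealInnerProductSpace

private lemma sym_psd_norm_sq' {E : Type*} [NormedAddCommGroup E] [InnerProductSpace ℝ E]
    (A : E →L[ℝ] E) (α : ℝ) (hα : 0 ≤ α)
    (hsym : ∀ v w : E, ⟪A v, w⟫ = ⟪v, A w⟫)
    (hpsd : ∀ v : E, 0 ≤ ⟪v, A v⟫)
    (hub : ∀ v : E, ⟪v, A v⟫ ≤ α * ‖v‖^2) (u : E) :
    ‖A u‖^2 ≤ α * ⟪u, A u⟫ := by
  set v := A u with hv
  have key : ∀ s : ℝ, 0 ≤ ⟪u, A u⟫ + 2*s*‖v‖^2 + s^2 * ⟪v, A v⟫ := by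
    intro s
    have h0 := hpsd (u + s • v)
    have e1 : A (u + s • v) = A u + s • A v := by simp
    rw [e1] at h0
    have e2 : ⟪u + s•v, A u + s • A v⟫
        = ⟪u, A u⟫ + s*⟪u, A v⟫ + s*⟪v, A u⟫ + s^2*⟪v, A v⟫ := by
      rw [inner_add_left, inner_add_right, inner_add_right, real_inner_smul_left,
        real_inner_smul_left, real_inner_smul_right, real_inner_smul_right]
      ring
    have e3 : ⟪u, A v⟫ = ‖v‖^2 := by
      rw [← hsym, ← hv, real_inner_self_eq_norm_sq]
    have e4 : ⟪v, A u⟫ = ‖v‖^2 := by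
      rw [← hv, real_inner_self_eq_norm_sq]
    rw [e2, e3, e4] at h0
    nlinarith [h0]
  rcases (norm_nonneg v).eq_or_lt with hv0 | hv0
  · have : ‖A u‖^2 = 0 := by rw [← hv, ← hv0]; ring
    rw [this]; exact mul_nonneg hα (hpsd u)
  rcases hα.eq_or_lt with hα0 | hα0
  · have hp : ⟪u, A u⟫ = 0 :=
      le_antisymm ((hub u).trans (by rw [← hα0]; simp)) (hpsd u)
    have hvv : ⟪v, A v⟫ = 0 :=
      le_antisymm ((hub v).trans (by rw [← hα0]; simp)) (hpsd v)
    have k1 := key (-1)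
    rw [hp, hvv] at k1
    nlinarith
  · have k1 := key (-1/α)
    have hα' : α ≠ 0 := ne_of_gt hα0
    have k2 : 0 ≤ ⟪u, A u⟫ * α^2 - 2*α*‖v‖^2 + ⟪v, A v⟫ := by
      have h5 := mul_le_mul_of_nonneg_left k1 (le_of_lt (mul_pos hα0 hα0))
      have expand : α * α * (⟪u, A u⟫ + 2*(-1/α)*‖v‖^2 + (-1/α)^2 * ⟪v, A v⟫)
          = ⟪u, A u⟫ * α^2 - 2*α*‖v‖^2 + ⟪v, A v⟫ := by field_simp; ring
      rw [expand] at h5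
      linarith [h5]
    nlinarith [hub v, hα0, hpsd u]

private lemma spec_center_bound' {n : ℕ}
    (T : EuclideanSpace ℝ (Fin n) →L[ℝ] EuclideanSpace ℝ (Fin n))
    (m L : ℝ) (hmL : m ≤ L)
    (hsym : ∀ v w : EuclideanSpace ℝ (Fin n), ⟪T v, w⟫ = ⟪v, T w⟫)
    (hlo : ∀ v : EuclideanSpace ℝ (Fin n), m * ‖v‖^2 ≤ ⟪v, T v⟫)
    (hT : ‖T‖ ≤ L) (u : EuclideanSpace ℝ (Fin n)) :
    ‖T u - ((m + L)/2) • u‖ ≤ ((L - m)/2) * ‖u‖ := by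
  set A : EuclideanSpace ℝ (Fin n) →L[ℝ] EuclideanSpace ℝ (Fin n) :=
    T - m • ContinuousLinearMap.id ℝ _ with hA
  have hAapp : ∀ w, A w = T w - m • w := by intro w; simp [hA]
  have hAsym : ∀ v w : EuclideanSpace ℝ (Fin n), ⟪A v, w⟫ = ⟪v, A w⟫ := by
    intro v w
    rw [hAapp, hAapp, inner_sub_left, inner_sub_right, hsym v w,
      real_inner_smul_left, real_inner_smul_right]
  have hApsd : ∀ v : EuclideanSpace ℝ (Fin n), 0 ≤ ⟪v, A v⟫ := by
    intro v
    rw [hAapp, inner_sub_right, real_inner_smul_right, real_inner_self_eq_norm_sq]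
    linarith [hlo v]
  have hAub : ∀ v : EuclideanSpace ℝ (Fin n), ⟪v, A v⟫ ≤ (L - m) * ‖v‖^2 := by
    intro v
    rw [hAapp, inner_sub_right, real_inner_smul_right, real_inner_self_eq_norm_sq]
    have h1 : ⟪v, T v⟫ ≤ ‖v‖ * ‖T v‖ := real_inner_le_norm v (T v)
    have h2 : ‖T v‖ ≤ L * ‖v‖ := by
      calc ‖T v‖ ≤ ‖T‖ * ‖v‖ := T.le_opNorm v
        _ ≤ L * ‖v‖ := by gcongr
    nlinarith [norm_nonneg v, norm_nonneg (T v)]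
  have hkey := sym_psd_norm_sq' A (L - m) (by linarith) hAsym hApsd hAub u
  have heq : T u - ((m + L)/2) • u = A u - ((L - m)/2) • u := by
    rw [hAapp]; module
  rw [heq]
  have hsq : ‖A u - ((L - m)/2) • u‖^2 ≤ (((L - m)/2) * ‖u‖)^2 := by
    rw [norm_sub_sq_real, real_inner_smul_right, norm_smul, Real.norm_eq_abs,
      abs_of_nonneg (by linarith : (0:ℝ) ≤ (L - m)/2)]
    nlinarith [hkey, real_inner_comm u (A u)]
  have h0 : (0:ℝ) ≤ ((L - m)/2) * ‖u‖ :=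
    mul_nonneg (by linarith) (norm_nonneg u)
  exact (pow_le_pow_iff_left₀ (norm_nonneg _) h0 two_ne_zero).mp hsq

namespace TVOpt

variable {n : ℕ} (P : TVOpt n)

private lemma hess_symm (x : EuclideanSpace ℝ (Fin n)) (t : ℝ)
    (v w : EuclideanSpace ℝ (Fin n)) :
    ⟪P.hess x t v, w⟫ = ⟪v, P.hess x t w⟫ := by
  have hf : ∀ y, HasFDerivAt (fun z => P.f z t) (innerSL ℝ (P.grad y t)) y := by
    intro y
    have h1 := (P.grad_spec y t).hasFDerivAt
    have : (InnerProductSpace.toDual ℝ (EuclideanSpace ℝ (Fin n))) (P.grad y t)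
        = innerSL ℝ (P.grad y t) := by
      ext z; simp [InnerProductSpace.toDual_apply_apply]
    rwa [this] at h1
  have hD : HasFDerivAt (fun y => innerSL ℝ (P.grad y t))
      ((innerSL ℝ).comp (P.hess x t)) x :=
    (innerSL ℝ).hasFDerivAt.comp x (P.hess_spec x t)
  have hsym := second_derivative_symmetric hf hD v w
  simp only [ContinuousLinearMap.comp_apply, innerSL_apply_apply] at hsym
  rw [hsym, real_inner_comm]

private lemma mL (hn : n ≠ 0) : P.m ≤ P.L := by
  have i : Fin n := ⟨0, Nat.pos_of_ne_zero hn⟩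
  set v : EuclideanSpace ℝ (Fin n) := EuclideanSpace.single i (1:ℝ) with hvdef
  have hv : ‖v‖ = 1 := by rw [hvdef, EuclideanSpace.norm_single]; norm_num
  have h1 := P.strong_convex 0 0 v
  have h2 : ⟪v, P.hess 0 0 v⟫ ≤ P.L := by
    calc ⟪v, P.hess 0 0 v⟫ ≤ ‖v‖ * ‖P.hess 0 0 v‖ := real_inner_le_norm _ _
      _ ≤ ‖v‖ * (‖P.hess 0 0‖ * ‖v‖) := by gcongr; exact (P.hess 0 0).le_opNorm v
      _ ≤ P.L := by rw [hv, one_mul, mul_one]; exact P.hess_bound 0 0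
  rw [hv] at h1
  simpa using le_trans (by simpa using h1) h2

private lemma grad_center_lip (hmL : P.m ≤ P.L) (t : ℝ)
    (y z : EuclideanSpace ℝ (Fin n)) :
    ‖(P.grad y t - ((P.m + P.L)/2) • y) - (P.grad z t - ((P.m + P.L)/2) • z)‖
      ≤ ((P.L - P.m)/2) * ‖y - z‖ := by
  have hf : ∀ w ∈ (Set.univ : Set (EuclideanSpace ℝ (Fin n))),
      HasFDerivWithinAt (fun w => P.grad w t - ((P.m + P.L)/2) • w)
        (P.hess w t - ((P.m + P.L)/2) • ContinuousLinearMap.id ℝ _) Set.univ w := by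
    intro w _
    exact ((P.hess_spec w t).sub ((hasFDerivAt_id w).const_smul
      ((P.m + P.L)/2))).hasFDerivWithinAt
  have hb : ∀ w ∈ (Set.univ : Set (EuclideanSpace ℝ (Fin n))),
      ‖P.hess w t - ((P.m + P.L)/2) • ContinuousLinearMap.id ℝ _‖ ≤ (P.L - P.m)/2 := by
    intro w _
    refine ContinuousLinearMap.opNorm_le_bound _ (by linarith) (fun u => ?_)
    have := spec_center_bound' (P.hess w t) P.m P.L hmL (P.hess_symm w t)
      (P.strong_convex w t) (P.hess_bound w t) u
    simpa using this
  exact convex_univ.norm_image_sub_le_of_norm_hasFDerivWithin_le hf hb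
    (Set.mem_univ z) (Set.mem_univ y)

private lemma strong_mono (hmL : P.m ≤ P.L) (t : ℝ)
    (y z : EuclideanSpace ℝ (Fin n)) :
    P.m * ‖y - z‖ ≤ ‖P.grad y t - P.grad z t‖ := by
  rcases eq_or_ne y z with rfl | hyz
  · simp
  have hu : 0 < ‖y - z‖ := by
    rw [norm_pos_iff]; exact sub_ne_zero_of_ne hyz
  set c := (P.m + P.L)/2 with hc
  set r := (P.L - P.m)/2 with hr
  have hlip := P.grad_center_lip hmL t y z
  rw [← hr] at hlip
  set d := (P.grad y t - c • y) - (P.grad z t - c • z) with hd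
  have hiden : P.grad y t - P.grad z t = d + c • (y - z) := by rw [hd]; module
  have hinner : P.m * ‖y - z‖^2 ≤ ⟪P.grad y t - P.grad z t, y - z⟫ := by
    rw [hiden, inner_add_left, real_inner_smul_left, real_inner_self_eq_norm_sq]
    have h1 : -(r * ‖y - z‖^2) ≤ ⟪d, y - z⟫ := by
      have := abs_real_inner_le_norm d (y - z)
      have h2 : ‖d‖ * ‖y - z‖ ≤ r * ‖y - z‖ * ‖y - z‖ := by
        have := mul_le_mul_of_nonneg_right hlip (norm_nonneg (y - z))
        nlinarith [this]
      nlinarith [neg_abs_le (⟪d, y - z⟫ : ℝ), this]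
    have hcr : c - r = P.m := by rw [hc, hr]; ring
    nlinarith [h1]
  have hCS : ⟪P.grad y t - P.grad z t, y - z⟫
      ≤ ‖P.grad y t - P.grad z t‖ * ‖y - z‖ := real_inner_le_norm _ _
  have := hinner.trans hCS
  nlinarith [this, hu]

private lemma grad_time_lip (x : EuclideanSpace ℝ (Fin n)) (t t' : ℝ) :
    ‖P.grad x t' - P.grad x t‖ ≤ P.C0 * |t' - t| := by
  have := Convex.norm_image_sub_le_of_norm_hasDerivWithin_le
    (f := fun s => P.grad x s) (f' := fun s => P.dtgrad x s) (s := Set.univ)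
    (fun s _ => (P.dtgrad_spec x s).hasDerivWithinAt)
    (fun s _ => P.dtgrad_bound x s) convex_univ (Set.mem_univ t) (Set.mem_univ t')
  simpa [Real.norm_eq_abs] using this

private lemma xstar_lip (hmL : P.m ≤ P.L) (t t' : ℝ) :
    ‖P.xstar t' - P.xstar t‖ ≤ P.C0 / P.m * |t' - t| := by
  have h1 := P.strong_mono hmL t' (P.xstar t') (P.xstar t)
  rw [P.xstar_grad t'] at h1
  have h2 : ‖(0 : EuclideanSpace ℝ (Fin n)) - P.grad (P.xstar t) t'‖
      = ‖P.grad (P.xstar t) t' - P.grad (P.xstar t) t‖ := by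
    rw [zero_sub, norm_neg, P.xstar_grad t, sub_zero]
  rw [h2] at h1
  have h3 := P.grad_time_lip (P.xstar t) t t'
  rw [div_mul_eq_mul_div, le_div_iff₀ P.m_pos]
  calc ‖P.xstar t' - P.xstar t‖ * P.m = P.m * ‖P.xstar t' - P.xstar t‖ := by ring
    _ ≤ ‖P.grad (P.xstar t) t' - P.grad (P.xstar t) t‖ := h1
    _ ≤ P.C0 * |t' - t| := h3

private lemma hessInv_bound (x : EuclideanSpace ℝ (Fin n)) (t : ℝ)
    (w : EuclideanSpace ℝ (Fin n)) :
    ‖P.hessInv x t w‖ ≤ ‖w‖ / P.m := by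
  set u := P.hessInv x t w with hu
  have hHu : P.hess x t u = w := by
    have := DFunLike.congr_fun (P.hessInv_right x t) w
    simpa using this
  have h1 := P.strong_convex x t u
  have h2 : ⟪u, P.hess x t u⟫ ≤ ‖u‖ * ‖P.hess x t u‖ := real_inner_le_norm _ _
  rw [hHu] at h1 h2
  rw [le_div_iff₀ P.m_pos]
  rcases (norm_nonneg u).eq_or_lt with h0 | h0
  · rw [← h0]; simpa using norm_nonneg w
  · nlinarith [h1, h2]

private lemma step_contract (hmL : P.m ≤ P.L) (γ ρ : ℝ) (hγ0 : 0 ≤ γ)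
    (hρmax : max |1 - γ * P.m| |1 - γ * P.L| ≤ ρ) (t : ℝ)
    (y z : EuclideanSpace ℝ (Fin n)) (hz : P.grad z t = 0) :
    ‖y - γ • P.grad y t - z‖ ≤ ρ * ‖y - z‖ := by
  set c := (P.m + P.L)/2 with hc
  set r := (P.L - P.m)/2 with hr
  have hr0 : 0 ≤ r := by rw [hr]; linarith
  have hmax : |1 - γ * c| + γ * r ≤ ρ := by
    refine le_trans ?_ hρmax
    rcases le_or_gt 0 (1 - γ * c) with hcase | hcase
    · rw [abs_of_nonneg hcase]
      have : (1 - γ * c) + γ * r = 1 - γ * P.m := by rw [hc, hr]; ring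
      rw [this]
      exact le_trans (le_abs_self _) (le_max_left _ _)
    · rw [abs_of_neg hcase]
      have : -(1 - γ * c) + γ * r = -(1 - γ * P.L) := by rw [hc, hr]; ring
      rw [this]
      exact le_trans (neg_le_abs _) (le_max_right _ _)
  have hlip := P.grad_center_lip hmL t y z
  have hiden : y - γ • P.grad y t - z
      = (1 - γ * c) • (y - z)
        - γ • ((P.grad y t - c • y) - (P.grad z t - c • z)) := by
    rw [hz]; module
  calc ‖y - γ • P.grad y t - z‖
      = ‖(1 - γ * c) • (y - z)
        - γ • ((P.grad y t - c • y) - (P.grad z t - c • z))‖ := by rw [hiden]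
    _ ≤ ‖(1 - γ * c) • (y - z)‖
        + ‖γ • ((P.grad y t - c • y) - (P.grad z t - c • z))‖ := norm_sub_le _ _
    _ = |1 - γ * c| * ‖y - z‖
        + γ * ‖(P.grad y t - c • y) - (P.grad z t - c • z)‖ := by
        rw [norm_smul, norm_smul, Real.norm_eq_abs, Real.norm_eq_abs,
          abs_of_nonneg hγ0]
    _ ≤ |1 - γ * c| * ‖y - z‖ + γ * (r * ‖y - z‖) := by gcongr
    _ = (|1 - γ * c| + γ * r) * ‖y - z‖ := by ring
    _ ≤ ρ * ‖y - z‖ := mul_le_mul_of_nonneg_right hmax (norm_nonneg _)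

end TVOpt

/-- **Corollary 1, part a.** If `ρ^τ·σ ≥ 1` and `ρ^τ < 1`, the GTT
iterates have an asymptotic tracking error of order `O(h)`:
`limsup_k ‖x_k − x*(t_k)‖ ≤ 2C₀ρ^τ h / (m(1−ρ^τ))`. -/
theorem gtt_asymptotic_error_Oh (n : ℕ) (P : TVOpt n) (h : ℝ) (hh : 0 < h)
    (γ : ℝ) (τ : ℕ) (hτ : 1 ≤ τ) (hγ0 : 0 < γ) (hγL : γ < 2 / P.L)
    (ρ : ℝ) (hρ : ρ = max |1 - γ * P.m| |1 - γ * P.L|)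
    (σ : ℝ) (hσ : σ = 1 + h * (P.C0 * P.C1 / P.m ^ 2 + P.C2 / P.m))
    (hbig : 1 ≤ ρ ^ τ * σ) (hρτ : ρ ^ τ < 1)
    (x : ℕ → EuclideanSpace ℝ (Fin n))
    (hrec : ∀ k : ℕ, x (k + 1) =
      (fun y => y - γ • P.grad y (((k : ℝ) + 1) * h))^[τ]
        (x k - h • P.hessInv (x k) ((k : ℝ) * h) (P.dtgrad (x k) ((k : ℝ) * h)))) :
    Filter.limsup (fun k : ℕ => ‖x k - P.xstar ((k : ℝ) * h)‖) Filter.atTop ≤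
      2 * P.C0 * ρ ^ τ * h / (P.m * (1 - ρ ^ τ)) := by
  have hC0 : 0 ≤ P.C0 := le_trans (norm_nonneg _) (P.dtgrad_bound 0 0)
  have hρ0 : 0 ≤ ρ := by rw [hρ]; exact le_trans (abs_nonneg _) (le_max_left _ _)
  have hq0 : 0 ≤ ρ ^ τ := pow_nonneg hρ0 τ
  have h1q : 0 < 1 - ρ ^ τ := by linarith
  have hRHS : 0 ≤ 2 * P.C0 * ρ ^ τ * h / (P.m * (1 - ρ ^ τ)) := by
    apply div_nonneg
    · have : (0:ℝ) ≤ 2 * P.C0 := by linarith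
      exact mul_nonneg (mul_nonneg this hq0) hh.le
    · exact mul_nonneg P.m_pos.le h1q.le
  by_cases hn : n = 0
  · subst hn
    have hz : (fun k : ℕ => ‖x k - P.xstar ((k : ℝ) * h)‖) = fun _ => (0:ℝ) := by
      funext k
      simp [EuclideanSpace.norm_eq]
    rw [hz, Filter.limsup_const]
    exact hRHS
  · have hmL : P.m ≤ P.L := P.mL hn
    set q := ρ ^ τ with hqdef
    set B := 2 * P.C0 * h / P.m with hBdef
    have hB0 : 0 ≤ B := by
      apply div_nonneg _ P.m_pos.le
      have : (0:ℝ) ≤ 2 * P.C0 := by linarith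
      exact mul_nonneg this hh.le
    set M := q * B / (1 - q) with hMdef
    have hM0 : 0 ≤ M := div_nonneg (mul_nonneg hq0 hB0) h1q.le
    -- contraction over the τ correction iterates
    have iter_bound : ∀ (t : ℝ) (s : ℕ) (y : EuclideanSpace ℝ (Fin n)),
        ‖(fun w => w - γ • P.grad w t)^[s] y - P.xstar t‖
          ≤ ρ ^ s * ‖y - P.xstar t‖ := by
      intro t s
      induction s with
      | zero => intro y; simp
      | succ s ih =>
        intro y
        rw [Function.iterate_succ_apply']
        calc ‖(fun w => w - γ • P.grad w t) ((fun w => w - γ • P.grad w t)^[s] y)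
              - P.xstar t‖
            ≤ ρ * ‖(fun w => w - γ • P.grad w t)^[s] y - P.xstar t‖ :=
              P.step_contract hmL γ ρ hγ0.le (le_of_eq hρ.symm) t _ _ (P.xstar_grad t)
          _ ≤ ρ * (ρ ^ s * ‖y - P.xstar t‖) := by
              exact mul_le_mul_of_nonneg_left (ih y) hρ0
          _ = ρ ^ (s + 1) * ‖y - P.xstar t‖ := by ring
    -- one-step recursion on the tracking error
    have onestep : ∀ k : ℕ, ‖x (k + 1) - P.xstar (((k : ℝ) + 1) * h)‖
        ≤ q * (‖x k - P.xstar ((k : ℝ) * h)‖ + B) := by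
      intro k
      rw [hrec k]
      refine (iter_bound (((k : ℝ) + 1) * h) τ _).trans ?_
      rw [← hqdef]
      refine mul_le_mul_of_nonneg_left ?_ hq0
      set v := P.hessInv (x k) ((k : ℝ) * h) (P.dtgrad (x k) ((k : ℝ) * h)) with hvdef
      have hiden : x k - h • v - P.xstar (((k : ℝ) + 1) * h)
          = (x k - P.xstar ((k : ℝ) * h)) - h • v
            - (P.xstar (((k : ℝ) + 1) * h) - P.xstar ((k : ℝ) * h)) := by
        module
      rw [hiden]
      have hv : ‖v‖ ≤ P.C0 / P.m := by
        refine (P.hessInv_bound _ _ _).trans ?_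
        exact div_le_div_of_nonneg_right (P.dtgrad_bound _ _) P.m_pos.le
      have hxs : ‖P.xstar (((k : ℝ) + 1) * h) - P.xstar ((k : ℝ) * h)‖
          ≤ P.C0 / P.m * h := by
        refine (P.xstar_lip hmL ((k : ℝ) * h) (((k : ℝ) + 1) * h)).trans ?_
        have : |((k : ℝ) + 1) * h - (k : ℝ) * h| = h := by
          rw [show ((k : ℝ) + 1) * h - (k : ℝ) * h = h by ring, abs_of_pos hh]
        rw [this]
      have hBeq : h * (P.C0 / P.m) + P.C0 / P.m * h = B := by
        rw [hBdef]; field_simp; ring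
      calc ‖(x k - P.xstar ((k : ℝ) * h)) - h • v
            - (P.xstar (((k : ℝ) + 1) * h) - P.xstar ((k : ℝ) * h))‖
          ≤ ‖(x k - P.xstar ((k : ℝ) * h)) - h • v‖
            + ‖P.xstar (((k : ℝ) + 1) * h) - P.xstar ((k : ℝ) * h)‖ := norm_sub_le _ _
        _ ≤ (‖x k - P.xstar ((k : ℝ) * h)‖ + ‖h • v‖)
            + ‖P.xstar (((k : ℝ) + 1) * h) - P.xstar ((k : ℝ) * h)‖ := by
            gcongr
            exact norm_sub_le _ _
        _ ≤ (‖x k - P.xstar ((k : ℝ) * h)‖ + h * (P.C0 / P.m)) + P.C0 / P.m * h := by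
            gcongr
            rw [norm_smul, Real.norm_eq_abs, abs_of_pos hh]
            exact mul_le_mul_of_nonneg_left hv hh.le
        _ = ‖x k - P.xstar ((k : ℝ) * h)‖ + B := by rw [← hBeq]; ring
    -- geometric decay
    have hMeq : q * M + q * B = M := by
      rw [hMdef]
      field_simp
      ring
    have geom : ∀ k : ℕ, ‖x k - P.xstar ((k : ℝ) * h)‖
        ≤ q ^ k * ‖x 0 - P.xstar ((0 : ℝ) * h)‖ + M := by
      intro k
      induction k with
      | zero => simpa using hM0
      | succ k ih =>
        have hcast : ((k + 1 : ℕ) : ℝ) = (k : ℝ) + 1 := by push_cast; ring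
        rw [hcast]
        calc ‖x (k + 1) - P.xstar (((k : ℝ) + 1) * h)‖
            ≤ q * (‖x k - P.xstar ((k : ℝ) * h)‖ + B) := onestep k
          _ ≤ q * ((q ^ k * ‖x 0 - P.xstar ((0 : ℝ) * h)‖ + M) + B) := by
              refine mul_le_mul_of_nonneg_left ?_ hq0
              linarith [ih]
          _ = q ^ (k + 1) * ‖x 0 - P.xstar ((0 : ℝ) * h)‖ + (q * M + q * B) := by ring
          _ = q ^ (k + 1) * ‖x 0 - P.xstar ((0 : ℝ) * h)‖ + M := by rw [hMeq]
    -- pass to the limsup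
    have htend : Filter.Tendsto
        (fun k : ℕ => q ^ k * ‖x 0 - P.xstar ((0 : ℝ) * h)‖ + M)
        Filter.atTop (nhds M) := by
      have h1 := tendsto_pow_atTop_nhds_zero_of_lt_one hq0 hρτ
      have h2 := (h1.mul_const (‖x 0 - P.xstar ((0 : ℝ) * h)‖)).add_const M
      simpa using h2
    have hcob : Filter.IsCoboundedUnder (· ≤ ·) Filter.atTop
        (fun k : ℕ => ‖x k - P.xstar ((k : ℝ) * h)‖) :=
      Filter.isCoboundedUnder_le_of_eventually_le Filter.atTop
        (x := 0) (Filter.Eventually.of_forall fun k => norm_nonneg _)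
    have hbd : Filter.IsBoundedUnder (· ≤ ·) Filter.atTop
        (fun k : ℕ => q ^ k * ‖x 0 - P.xstar ((0 : ℝ) * h)‖ + M) :=
      htend.isBoundedUnder_le
    calc Filter.limsup (fun k : ℕ => ‖x k - P.xstar ((k : ℝ) * h)‖) Filter.atTop
        ≤ Filter.limsup
            (fun k : ℕ => q ^ k * ‖x 0 - P.xstar ((0 : ℝ) * h)‖ + M)
            Filter.atTop :=
          Filter.limsup_le_limsup (Filter.Eventually.of_forall geom) hcob hbd
      _ = M := htend.limsup_eq
      _ = 2 * P.C0 * q * h / (P.m * (1 - q)) := by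
          rw [hMdef, hBdef]
          field_simp
end
end

section
/- (Theorem 3, part i) Under Assumptions 1 and 2, let the AGT stepsize satisfy 0 < γ < 2/L, so that ρ := max{|1−γm|, |1−γL|} < 1. Then for any sampling period h > 0, the AGT iterates satisfy, for every k ≥ 0: ‖x_k − x*(t_k)‖ ≤ ρ^{τk}·‖x₀ − x*(t₀)‖ + ρ^τ·[ h·(2C₀/m) + (h²/2)·(C₀²C₁/m³ + 2C₀C₂/m² + 2C₃/m) ]·(1 − ρ^{τk})/(1 − ρ^τ). -/
noncomputable section

namespace AGTAux

open InnerProductSpace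

variable {n : ℕ}

local notation "E'" => EuclideanSpace ℝ (Fin n)

/-- Polarization: a self-adjoint operator with quadratic form bounded by `c` has norm ≤ `c`. -/
lemma norm_apply_le_of_symm (T : E' →L[ℝ] E')
    (hsym : ∀ u w : E', ⟪T u, w⟫_ℝ = ⟪u, T w⟫_ℝ) {c : ℝ} (hc : 0 ≤ c)
    (hform : ∀ u : E', |⟪u, T u⟫_ℝ| ≤ c * ‖u‖ ^ 2) (v : E') : ‖T v‖ ≤ c * ‖v‖ := by
  rcases eq_or_ne (T v) 0 with h0 | h0
  · rw [h0, norm_zero]; positivity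
  have hTv : 0 < ‖T v‖ := norm_pos_iff.mpr h0
  have hv : v ≠ 0 := by rintro rfl; simp at h0
  have hvn : 0 < ‖v‖ := norm_pos_iff.mpr hv
  set w : E' := (‖v‖ / ‖T v‖) • T v with hw
  have hwn : ‖w‖ = ‖v‖ := by
    rw [hw, norm_smul, Real.norm_eq_abs, abs_div, abs_of_nonneg (norm_nonneg _),
      abs_of_nonneg (norm_nonneg _)]
    field_simp
  have h1 : ⟪w, T v⟫_ℝ = ‖v‖ * ‖T v‖ := by
    rw [hw, real_inner_smul_left, real_inner_self_eq_norm_mul_norm]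
    field_simp
  have h2 : ⟪v, T w⟫_ℝ = ‖v‖ * ‖T v‖ := by
    rw [← hsym v w, real_inner_comm]; exact h1
  have key : ⟪v + w, T (v + w)⟫_ℝ - ⟪v - w, T (v - w)⟫_ℝ = 4 * (‖v‖ * ‖T v‖) := by
    simp only [map_add, map_sub, inner_add_left, inner_add_right, inner_sub_left,
      inner_sub_right]
    linarith [h1, h2, real_inner_comm w (T v), real_inner_comm v (T w)]
  have hpar : ‖v + w‖ * ‖v + w‖ + ‖v - w‖ * ‖v - w‖ = 4 * (‖v‖ * ‖v‖) := by
    have := parallelogram_law_with_norm ℝ v w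
    rw [hwn] at this; linarith
  have hb1 := hform (v + w)
  have hb2 := hform (v - w)
  have habs1 : ⟪v + w, T (v + w)⟫_ℝ ≤ c * ‖v + w‖ ^ 2 := (abs_le.mp hb1).2
  have habs2 : -(c * ‖v - w‖ ^ 2) ≤ ⟪v - w, T (v - w)⟫_ℝ := (abs_le.mp hb2).1
  have : 4 * (‖v‖ * ‖T v‖) ≤ 4 * c * (‖v‖ * ‖v‖) := by nlinarith [sq_nonneg ‖v + w‖]
  nlinarith

/-- derivative of the gradient along a line segment -/
lemma hasDerivAt_grad_line (P : TVOpt n) (z v : E') (t s : ℝ) :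
    HasDerivAt (fun s : ℝ => P.grad (z + s • v) t) (P.hess (z + s • v) t v) s := by
  have h1 : HasDerivAt (fun s : ℝ => z + s • v) v s := by
    simpa using ((hasDerivAt_id s).smul_const v).const_add z
  exact (P.hess_spec (z + s • v) t).comp_hasDerivAt s h1

/-- the Hessian is self-adjoint (Schwarz symmetry of second derivatives) -/
lemma hess_symm (P : TVOpt n) (x : E') (t : ℝ) (v w : E') :
    ⟪P.hess x t v, w⟫_ℝ = ⟪v, P.hess x t w⟫_ℝ := by
  set D : E' →L[ℝ] (E' →L[ℝ] ℝ) :=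
    (InnerProductSpace.toDual ℝ E').toContinuousLinearEquiv.toContinuousLinearMap with hD
  have hf : ∀ y : E', HasFDerivAt (fun p => P.f p t) (D (P.grad y t)) y := fun y =>
    (P.grad_spec y t).hasFDerivAt
  have hx : HasFDerivAt (fun y : E' => D (P.grad y t)) (D.comp (P.hess x t)) x :=
    D.hasFDerivAt.comp x (P.hess_spec x t)
  have key := second_derivative_symmetric hf hx v w
  have e1 : (D.comp (P.hess x t)) v w = ⟪P.hess x t v, w⟫_ℝ := by
    simp [hD, InnerProductSpace.toDual_apply_apply]
  have e2 : (D.comp (P.hess x t)) w v = ⟪P.hess x t w, v⟫_ℝ := by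
    simp [hD, InnerProductSpace.toDual_apply_apply]
  rw [e1, e2] at key
  rw [key, real_inner_comm]

/-- pointwise operator contraction bound -/
lemma pointwise_bound (P : TVOpt n) {γ ρ : ℝ} (hγ0 : 0 < γ)
    (hρ : ρ = max |1 - γ * P.m| |1 - γ * P.L|) (u : E') (t : ℝ) (v : E') :
    ‖v - γ • P.hess u t v‖ ≤ ρ * ‖v‖ := by
  have hρ0 : 0 ≤ ρ := hρ ▸ le_trans (abs_nonneg _) (le_max_left _ _)
  set T : E' →L[ℝ] E' := ContinuousLinearMap.id ℝ E' - γ • P.hess u t with hT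
  have hTapp : ∀ z : E', T z = z - γ • P.hess u t z := fun z => rfl
  have hsym : ∀ a b : E', ⟪T a, b⟫_ℝ = ⟪a, T b⟫_ℝ := by
    intro a b
    rw [hTapp, hTapp]
    simp only [inner_sub_left, inner_sub_right, real_inner_smul_left, real_inner_smul_right]
    rw [hess_symm P u t a b]
  have hform : ∀ z : E', |⟪z, T z⟫_ℝ| ≤ ρ * ‖z‖ ^ 2 := by
    intro z
    have hq : ⟪z, T z⟫_ℝ = ‖z‖ ^ 2 - γ * ⟪z, P.hess u t z⟫_ℝ := by
      rw [hTapp, inner_sub_right, real_inner_smul_right, real_inner_self_eq_norm_sq]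
    have hlow : P.m * ‖z‖ ^ 2 ≤ ⟪z, P.hess u t z⟫_ℝ := P.strong_convex u t z
    have hupq : ⟪z, P.hess u t z⟫_ℝ ≤ P.L * ‖z‖ ^ 2 := by
      have c1 : ⟪z, P.hess u t z⟫_ℝ ≤ ‖z‖ * ‖P.hess u t z‖ := real_inner_le_norm z _
      have c2 : ‖P.hess u t z‖ ≤ ‖P.hess u t‖ * ‖z‖ := (P.hess u t).le_opNorm z
      have c3 := P.hess_bound u t
      nlinarith [norm_nonneg z, norm_nonneg (P.hess u t z)]
    have h1 : (1 - γ * P.L) * ‖z‖ ^ 2 ≤ ⟪z, T z⟫_ℝ := by rw [hq]; nlinarith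
    have h2 : ⟪z, T z⟫_ℝ ≤ (1 - γ * P.m) * ‖z‖ ^ 2 := by rw [hq]; nlinarith
    have h3 := abs_le_max_abs_abs h1 h2
    have h4 : max |(1 - γ * P.L) * ‖z‖ ^ 2| |(1 - γ * P.m) * ‖z‖ ^ 2| ≤ ρ * ‖z‖ ^ 2 := by
      rw [max_le_iff]
      constructor
      · rw [abs_mul, abs_of_nonneg (by positivity : (0:ℝ) ≤ ‖z‖ ^ 2)]
        have : |1 - γ * P.L| ≤ ρ := hρ ▸ le_max_right _ _
        nlinarith [sq_nonneg ‖z‖]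
      · rw [abs_mul, abs_of_nonneg (by positivity : (0:ℝ) ≤ ‖z‖ ^ 2)]
        have : |1 - γ * P.m| ≤ ρ := hρ ▸ le_max_left _ _
        nlinarith [sq_nonneg ‖z‖]
    exact h3.trans h4
  have := norm_apply_le_of_symm T hsym hρ0 hform v
  rwa [hTapp] at this

/-- one gradient-descent step contracts the distance to the minimizer by `ρ` -/
lemma step_contract (P : TVOpt n) {γ ρ : ℝ} (hγ0 : 0 < γ)
    (hρ : ρ = max |1 - γ * P.m| |1 - γ * P.L|) (t : ℝ) (y : E') :
    ‖(y - γ • P.grad y t) - P.xstar t‖ ≤ ρ * ‖y - P.xstar t‖ := by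
  set z := P.xstar t with hz
  set v : E' := y - z with hv
  set G : ℝ → E' := fun s => s • v - γ • P.grad (z + s • v) t with hG
  have hG' : ∀ s : ℝ, HasDerivAt G (v - γ • P.hess (z + s • v) t v) s := by
    intro s
    have h1 : HasDerivAt (fun s : ℝ => s • v) v s := by
      simpa using (hasDerivAt_id s).smul_const v
    exact h1.sub ((hasDerivAt_grad_line P z v t s).const_smul γ)
  have hbound : ∀ s : ℝ, ‖v - γ • P.hess (z + s • v) t v‖ ≤ ρ * ‖v‖ := fun s =>
    pointwise_bound P hγ0 hρ (z + s • v) t v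
  have key : ‖G 1 - G 0‖ ≤ ρ * ‖v‖ * ‖(1:ℝ) - 0‖ := by
    apply (convex_univ (𝕜 := ℝ) (E := ℝ)).norm_image_sub_le_of_norm_hasDerivWithin_le
      (f' := fun s => v - γ • P.hess (z + s • v) t v)
      (fun s _ => (hG' s).hasDerivWithinAt) (fun s _ => hbound s) (Set.mem_univ 0)
      (Set.mem_univ 1)
  have e1 : G 1 = (y - γ • P.grad y t) - z := by
    simp only [hG, one_smul]
    rw [hv, hz]
    have : P.xstar t + (y - P.xstar t) = y := by abel
    rw [this]; abel
  have e0 : G 0 = 0 := by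
    simp [hG, hz, P.xstar_grad t]
  rw [e1, e0, sub_zero] at key
  simpa using key

/-- iterated gradient-descent contraction -/
lemma iter_contract (P : TVOpt n) {γ ρ : ℝ} (hγ0 : 0 < γ)
    (hρ : ρ = max |1 - γ * P.m| |1 - γ * P.L|) (t : ℝ) (τ : ℕ) (z : E') :
    ‖(fun y => y - γ • P.grad y t)^[τ] z - P.xstar t‖ ≤ ρ ^ τ * ‖z - P.xstar t‖ := by
  have hρ0 : 0 ≤ ρ := hρ ▸ le_trans (abs_nonneg _) (le_max_left _ _)
  induction τ with
  | zero => simp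
  | succ j ih =>
    rw [Function.iterate_succ_apply']
    calc ‖((fun y => y - γ • P.grad y t)^[j] z - γ • P.grad ((fun y => y - γ • P.grad y t)^[j] z) t) - P.xstar t‖
        ≤ ρ * ‖(fun y => y - γ • P.grad y t)^[j] z - P.xstar t‖ := step_contract P hγ0 hρ t _
      _ ≤ ρ * (ρ ^ j * ‖z - P.xstar t‖) := mul_le_mul_of_nonneg_left ih hρ0
      _ = ρ ^ (j + 1) * ‖z - P.xstar t‖ := by ring

/-- the gradient is `C₀`-Lipschitz in time -/
lemma grad_time_lip (P : TVOpt n) (x : E') (s t : ℝ) :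
    ‖P.grad x t - P.grad x s‖ ≤ P.C0 * |t - s| := by
  have key : ‖P.grad x t - P.grad x s‖ ≤ P.C0 * ‖t - s‖ := by
    apply (convex_univ (𝕜 := ℝ) (E := ℝ)).norm_image_sub_le_of_norm_hasDerivWithin_le
      (f' := fun r => P.dtgrad x r)
      (fun r _ => (P.dtgrad_spec x r).hasDerivWithinAt) (fun r _ => P.dtgrad_bound x r)
      (Set.mem_univ s) (Set.mem_univ t)
  rwa [Real.norm_eq_abs] at key

/-- strong monotonicity of the gradient -/
lemma strong_mono (P : TVOpt n) (y z : E') (t : ℝ) :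
    P.m * ‖y - z‖ ^ 2 ≤ ⟪y - z, P.grad y t - P.grad z t⟫_ℝ := by
  set v : E' := y - z with hv
  set ψ : ℝ → ℝ := fun s => ⟪v, P.grad (z + s • v) t⟫_ℝ - s * (P.m * ‖v‖ ^ 2) with hψ
  have hψ' : ∀ s : ℝ, HasDerivAt ψ (⟪v, P.hess (z + s • v) t v⟫_ℝ - P.m * ‖v‖ ^ 2) s := by
    intro s
    have h1 : HasDerivAt (fun s : ℝ => ⟪v, P.grad (z + s • v) t⟫_ℝ)
        ((innerSL ℝ v) (P.hess (z + s • v) t v)) s :=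
      ((innerSL ℝ v).hasFDerivAt).comp_hasDerivAt s (hasDerivAt_grad_line P z v t s)
    have h2 : HasDerivAt (fun s : ℝ => s * (P.m * ‖v‖ ^ 2)) (P.m * ‖v‖ ^ 2) s := by
      simpa using (hasDerivAt_id s).mul_const (P.m * ‖v‖ ^ 2)
    exact h1.sub h2
  have hmono : Monotone ψ := by
    apply monotone_of_deriv_nonneg
    · exact fun s => (hψ' s).differentiableAt
    · intro s
      rw [(hψ' s).deriv]
      have := P.strong_convex (z + s • v) t v
      linarith
  have h01 := hmono (by norm_num : (0:ℝ) ≤ 1)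
  simp only [hψ, one_smul, zero_smul, add_zero, zero_mul, sub_zero, one_mul] at h01
  have hy : z + v = y := by rw [hv]; abel
  rw [hy] at h01
  have := inner_sub_right (𝕜 := ℝ) v (P.grad y t) (P.grad z t)
  linarith [h01, this.ge, this.le]

/-- the optimal trajectory is Lipschitz -/
lemma xstar_lip (P : TVOpt n) (s t : ℝ) :
    P.m * ‖P.xstar t - P.xstar s‖ ≤ P.C0 * |t - s| := by
  set d : E' := P.xstar t - P.xstar s with hd
  rcases eq_or_ne d 0 with h | h
  · rw [h, norm_zero, mul_zero]
    have hC0 : 0 ≤ P.C0 := (norm_nonneg _).trans (P.dtgrad_bound 0 0)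
    positivity
  have hdn : 0 < ‖d‖ := norm_pos_iff.mpr h
  have h1 := strong_mono P (P.xstar t) (P.xstar s) s
  rw [P.xstar_grad s, sub_zero] at h1
  have h2 : P.grad (P.xstar t) s = P.grad (P.xstar t) s - P.grad (P.xstar t) t := by
    rw [P.xstar_grad t, sub_zero]
  rw [h2] at h1
  have h3 : ⟪d, P.grad (P.xstar t) s - P.grad (P.xstar t) t⟫_ℝ ≤ ‖d‖ * (P.C0 * |s - t|) :=
    (real_inner_le_norm d _).trans
      (mul_le_mul_of_nonneg_left (grad_time_lip P (P.xstar t) t s) (norm_nonneg d))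
  rw [abs_sub_comm s t] at h3
  nlinarith

/-- the Hessian inverse has norm at most `1/m` -/
lemma hessInv_bound (P : TVOpt n) (x : E') (t : ℝ) (w : E') :
    P.m * ‖P.hessInv x t w‖ ≤ ‖w‖ := by
  set v : E' := P.hessInv x t w with hv
  have hvw : P.hess x t v = w := by
    have := congrArg (fun A : E' →L[ℝ] E' => A w) (P.hessInv_right x t)
    simpa using this
  have h1 := P.strong_convex x t v
  rw [hvw] at h1
  have h2 : ⟪v, w⟫_ℝ ≤ ‖v‖ * ‖w‖ := real_inner_le_norm v w
  rcases eq_or_ne v 0 with h | h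
  · rw [h, norm_zero, mul_zero]; exact norm_nonneg w
  have hvn : 0 < ‖v‖ := norm_pos_iff.mpr h
  nlinarith

/-- the strong-convexity constant is at most the Hessian bound (needs `n > 0`) -/
lemma m_le_L (P : TVOpt n) (hn : 0 < n) : P.m ≤ P.L := by
  set v : E' := EuclideanSpace.single (⟨0, hn⟩ : Fin n) (1 : ℝ) with hv
  have hvn : ‖v‖ = 1 := by rw [hv, EuclideanSpace.norm_single]; norm_num
  have h1 := P.strong_convex 0 0 v
  have h2 : ⟪v, P.hess 0 0 v⟫_ℝ ≤ ‖v‖ * ‖P.hess 0 0 v‖ := real_inner_le_norm _ _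
  have h3 : ‖P.hess 0 0 v‖ ≤ ‖P.hess 0 0‖ * ‖v‖ := (P.hess 0 0).le_opNorm v
  have h4 := P.hess_bound 0 0
  rw [hvn] at h1 h2 h3
  nlinarith

end AGTAux

set_option maxHeartbeats 1000000 in
/-- **Theorem 3, part i.** AGT (gradient tracking with the backward
finite-difference approximation of the time derivative) with stepsize `0 < γ < 2/L`
(so that `ρ < 1`) converges exponentially up to a bounded error, for any `h > 0`. -/
theorem agt_convergence_any_period (n : ℕ) (hn : 0 < n) (P : TVOpt n) (h : ℝ) (hh : 0 < h)
    (γ : ℝ) (τ : ℕ) (hτ : 1 ≤ τ) (hγ0 : 0 < γ) (hγL : γ < 2 / P.L)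
    (ρ : ℝ) (hρ : ρ = max |1 - γ * P.m| |1 - γ * P.L|)
    (x : ℕ → EuclideanSpace ℝ (Fin n))
    (hrec : ∀ k : ℕ, x (k + 1) =
      (fun y => y - γ • P.grad y (((k : ℝ) + 1) * h))^[τ]
        (x k - h • P.hessInv (x k) ((k : ℝ) * h)
          (h⁻¹ • (P.grad (x k) ((k : ℝ) * h) - P.grad (x k) ((k : ℝ) * h - h))))) :
    ρ < 1 ∧ ∀ k : ℕ,
      ‖x k - P.xstar ((k : ℝ) * h)‖ ≤
        ρ ^ (τ * k) * ‖x 0 - P.xstar 0‖ +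
        ρ ^ τ * (h * (2 * P.C0 / P.m) +
            h ^ 2 / 2 *
              (P.C0 ^ 2 * P.C1 / P.m ^ 3 + 2 * P.C0 * P.C2 / P.m ^ 2 + 2 * P.C3 / P.m)) *
          ((1 - ρ ^ (τ * k)) / (1 - ρ ^ τ)) := by
  have hm := P.m_pos
  have hC0 : 0 ≤ P.C0 := (norm_nonneg (P.dtgrad 0 0)).trans (P.dtgrad_bound 0 0)
  have hC1 : 0 ≤ P.C1 := (norm_nonneg (P.d3 0 0)).trans (P.d3_bound 0 0)
  have hC2 : 0 ≤ P.C2 := (norm_nonneg (P.dthess 0 0)).trans (P.dthess_bound 0 0)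
  have hC3 : 0 ≤ P.C3 := (norm_nonneg (P.dttgrad 0 0)).trans (P.dttgrad_bound 0 0)
  have hρ0 : 0 ≤ ρ := hρ ▸ le_trans (abs_nonneg _) (le_max_left _ _)
  have hmL : P.m ≤ P.L := AGTAux.m_le_L P hn
  have hL : 0 < P.L := lt_of_lt_of_le hm hmL
  have hγL2 : γ * P.L < 2 := by rw [lt_div_iff₀ hL] at hγL; linarith
  have hγm : 0 < γ * P.m := mul_pos hγ0 hm
  have hγmL : γ * P.m ≤ γ * P.L := mul_le_mul_of_nonneg_left hmL hγ0.le
  have hρ1 : ρ < 1 := by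
    rw [hρ, max_lt_iff, abs_lt, abs_lt]
    refine ⟨⟨by linarith, by linarith⟩, ⟨by linarith, by linarith⟩⟩
  refine ⟨hρ1, ?_⟩
  have hr0 : 0 ≤ ρ ^ τ := pow_nonneg hρ0 τ
  have hr1 : ρ ^ τ < 1 := pow_lt_one₀ hρ0 hρ1 (by omega)
  set Δ : ℝ := h * (2 * P.C0 / P.m) +
      h ^ 2 / 2 * (P.C0 ^ 2 * P.C1 / P.m ^ 3 + 2 * P.C0 * P.C2 / P.m ^ 2 + 2 * P.C3 / P.m)
    with hΔ
  have hΔ'0 : 0 ≤ h * (2 * P.C0 / P.m) := by positivity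
  have hΔ' : h * (2 * P.C0 / P.m) ≤ Δ := by
    rw [hΔ]
    have : 0 ≤ h ^ 2 / 2 *
        (P.C0 ^ 2 * P.C1 / P.m ^ 3 + 2 * P.C0 * P.C2 / P.m ^ 2 + 2 * P.C3 / P.m) := by
      positivity
    linarith
  have hΔ0 : 0 ≤ Δ := hΔ'0.trans hΔ'
  -- the key one-step recursion
  have key : ∀ k : ℕ, ‖x (k + 1) - P.xstar (((k : ℝ) + 1) * h)‖ ≤
      ρ ^ τ * (‖x k - P.xstar ((k : ℝ) * h)‖ + h * (2 * P.C0 / P.m)) := by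
    intro k
    rw [hrec k]
    set tk : ℝ := (k : ℝ) * h with htk
    set t1 : ℝ := ((k : ℝ) + 1) * h with ht1
    set a : EuclideanSpace ℝ (Fin n) :=
      h⁻¹ • (P.grad (x k) tk - P.grad (x k) (tk - h)) with ha
    set w : EuclideanSpace ℝ (Fin n) := h • P.hessInv (x k) tk a with hw
    -- bound on the optimal-trajectory drift
    have hb1 := AGTAux.xstar_lip P t1 tk
    have habs : |tk - t1| = h := by
      have e : tk - t1 = -h := by rw [htk, ht1]; ring
      rw [e, abs_neg, abs_of_pos hh]
    rw [habs] at hb1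
    have b1 : ‖P.xstar tk - P.xstar t1‖ ≤ h * P.C0 / P.m := by
      rw [le_div_iff₀ hm]; nlinarith
    -- bound on the prediction term
    have hg := AGTAux.grad_time_lip P (x k) (tk - h) tk
    have habs2 : |tk - (tk - h)| = h := by
      have e : tk - (tk - h) = h := by ring
      rw [e, abs_of_pos hh]
    rw [habs2] at hg
    have harg : ‖a‖ ≤ P.C0 := by
      rw [ha, norm_smul, Real.norm_eq_abs, abs_inv, abs_of_pos hh, inv_mul_le_iff₀ hh]
      nlinarith
    have hInv := AGTAux.hessInv_bound P (x k) tk a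
    have b2 : ‖w‖ ≤ h * P.C0 / P.m := by
      rw [hw, norm_smul, Real.norm_eq_abs, abs_of_pos hh, le_div_iff₀ hm]
      have h6 : 0 ≤ ‖P.hessInv (x k) tk a‖ := norm_nonneg _
      have h5 : ‖P.hessInv (x k) tk a‖ * P.m ≤ P.C0 := by nlinarith
      calc h * ‖P.hessInv (x k) tk a‖ * P.m = h * (‖P.hessInv (x k) tk a‖ * P.m) := by ring
        _ ≤ h * P.C0 := by nlinarith
    have hsplit : x k - w - P.xstar t1 =
        (x k - P.xstar tk) + (P.xstar tk - P.xstar t1) - w := by abel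
    have hsub : ‖x k - w - P.xstar t1‖ ≤ ‖x k - P.xstar tk‖ + h * (2 * P.C0 / P.m) := by
      rw [hsplit]
      have e2 : h * (2 * P.C0 / P.m) = h * P.C0 / P.m + h * P.C0 / P.m := by ring
      calc ‖(x k - P.xstar tk) + (P.xstar tk - P.xstar t1) - w‖
          ≤ ‖(x k - P.xstar tk) + (P.xstar tk - P.xstar t1)‖ + ‖w‖ := norm_sub_le _ _
        _ ≤ ‖x k - P.xstar tk‖ + ‖P.xstar tk - P.xstar t1‖ + ‖w‖ := by
            linarith [norm_add_le (x k - P.xstar tk) (P.xstar tk - P.xstar t1)]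
        _ ≤ ‖x k - P.xstar tk‖ + h * (2 * P.C0 / P.m) := by rw [e2]; linarith
    calc ‖(fun y => y - γ • P.grad y t1)^[τ] (x k - w) - P.xstar t1‖
        ≤ ρ ^ τ * ‖x k - w - P.xstar t1‖ := AGTAux.iter_contract P hγ0 hρ t1 τ (x k - w)
      _ ≤ ρ ^ τ * (‖x k - P.xstar tk‖ + h * (2 * P.C0 / P.m)) :=
          mul_le_mul_of_nonneg_left hsub hr0
  -- conclude by induction
  intro k
  induction k with
  | zero => simp
  | succ k ih =>
    have hk := key k
    have hne : (1 : ℝ) - ρ ^ τ ≠ 0 := by linarith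
    rw [pow_mul] at ih ⊢
    push_cast
    calc ‖x (k + 1) - P.xstar (((k : ℝ) + 1) * h)‖
        ≤ ρ ^ τ * (‖x k - P.xstar ((k : ℝ) * h)‖ + h * (2 * P.C0 / P.m)) := hk
      _ ≤ ρ ^ τ * (((ρ ^ τ) ^ k * ‖x 0 - P.xstar 0‖ +
            ρ ^ τ * Δ * ((1 - (ρ ^ τ) ^ k) / (1 - ρ ^ τ))) + Δ) :=
          mul_le_mul_of_nonneg_left (add_le_add ih hΔ') hr0
      _ = (ρ ^ τ) ^ (k + 1) * ‖x 0 - P.xstar 0‖ +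
            ρ ^ τ * Δ * ((1 - (ρ ^ τ) ^ (k + 1)) / (1 - ρ ^ τ)) := by
          field_simp
          ring
end
end
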